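/- For every positive integer x, x ≤ ∑_{m ≤ x} (log m / log rad m) = O(x); that is, the average of log m / log rad m over m ≤ x is bounded between 1 and an absolute constant. -/

import Mathlib

open Finset

def rad (n : ℕ) : ℕ := ∏ p ∈ n.primeFactors, p

/-!
Writing `log m = ∑ v_p(m) log p` and `log (rad m) = ∑ log p` over the primes `p ∣ m` shows that
`log m / log (rad m)` is at most the largest exponent `v_p(m)`. For `m ≤ x` that exponent is at most
`1 + #{(n, k) ∈ [2, x]² : n ^ k ∣ m}`, and summing over `m ≤ x` and exchanging the order of summation
bounds the total by `x + ∑_{n, k ≥ 2} x / n ^ k ≤ x + 2x`. The lower bound is `rad m ≤ m`.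
-/

noncomputable def logRadRatio (m : ℕ) : ℝ :=
  if rad m = 1 then 1 else Real.log m / Real.log (rad m)

lemma rad_pos (m : ℕ) : 0 < rad m :=
  prod_pos fun _ hp => (Nat.prime_of_mem_primeFactors hp).pos

lemma rad_le {m : ℕ} (hm : m ≠ 0) : rad m ≤ m :=
  Nat.le_of_dvd (Nat.pos_of_ne_zero hm) (Nat.prod_primeFactors_dvd m)

lemma log_rad_pos {m : ℕ} (h : rad m ≠ 1) : 0 < Real.log (rad m) := by
  have := rad_pos m
  exact Real.log_pos (by exact_mod_cast (by omega : 1 < rad m))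

lemma log_rad_eq_sum (m : ℕ) : Real.log (rad m) = ∑ p ∈ m.primeFactors, Real.log p := by
  rw [rad, Nat.cast_prod, Real.log_prod]
  exact fun p hp => by exact_mod_cast (Nat.prime_of_mem_primeFactors hp).ne_zero

lemma log_eq_sum_factorization_mul_log {m : ℕ} (hm : m ≠ 0) :
    Real.log m = ∑ p ∈ m.primeFactors, m.factorization p * Real.log p := by
  conv_lhs => rw [← Nat.prod_factorization_pow_eq_self hm]
  rw [Finsupp.prod, Nat.support_factorization, Nat.cast_prod, Real.log_prod]
  · simp only [Nat.cast_pow, Real.log_pow]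
  · exact fun p hp => by exact_mod_cast (pow_pos (Nat.prime_of_mem_primeFactors hp).pos _).ne'

lemma log_le_mul_log_rad {m : ℕ} (hm : m ≠ 0) {B : ℝ}
    (hB : ∀ p ∈ m.primeFactors, (m.factorization p : ℝ) ≤ B) :
    Real.log m ≤ B * Real.log (rad m) := by
  rw [log_eq_sum_factorization_mul_log hm, log_rad_eq_sum, mul_sum]
  exact sum_le_sum fun p hp => mul_le_mul_of_nonneg_right (hB p hp) (Real.log_natCast_nonneg p)

lemma one_le_logRadRatio {m : ℕ} (hm : m ≠ 0) : 1 ≤ logRadRatio m := by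
  unfold logRadRatio
  split_ifs with h
  · rfl
  · rw [le_div_iff₀ (log_rad_pos h), one_mul]
    exact Real.log_le_log (by exact_mod_cast rad_pos m) (by exact_mod_cast rad_le hm)

lemma logRadRatio_le {m : ℕ} (hm : m ≠ 0) {B : ℝ} (hB₁ : 1 ≤ B)
    (hB : ∀ p ∈ m.primeFactors, (m.factorization p : ℝ) ≤ B) : logRadRatio m ≤ B := by
  unfold logRadRatio
  split_ifs with h
  · exact hB₁
  · rw [div_le_iff₀ (log_rad_pos h)]
    exact log_le_mul_log_rad hm hB

noncomputable def powerDivisorCount (x m : ℕ) : ℝ :=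
  ∑ n ∈ Icc 2 x, ∑ k ∈ Icc 2 x, if n ^ k ∣ m then 1 else 0

lemma powerDivisorCount_nonneg (x m : ℕ) : 0 ≤ powerDivisorCount x m :=
  sum_nonneg fun _ _ => sum_nonneg fun _ _ => by split_ifs <;> norm_num

lemma factorization_le_one_add_card_pow_dvd {x m p : ℕ} (hp : p.Prime) (hm : m ≠ 0)
    (hmx : m ≤ x) : (m.factorization p : ℝ) ≤ 1 + ∑ k ∈ Icc 2 x, if p ^ k ∣ m then 1 else 0 := by
  have hsub : Icc 2 (m.factorization p) ⊆ {k ∈ Icc 2 x | p ^ k ∣ m} := by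
    intro k hk
    rw [mem_Icc] at hk
    rw [mem_filter, mem_Icc]
    exact ⟨⟨hk.1, hk.2.trans ((Nat.factorization_lt p hm).le.trans hmx)⟩,
      (hp.pow_dvd_iff_le_factorization hm).2 hk.2⟩
  have hcard := card_le_card hsub
  rw [Nat.card_Icc] at hcard
  rw [sum_boole]
  exact_mod_cast (by omega : m.factorization p ≤ 1 + #{k ∈ Icc 2 x | p ^ k ∣ m})

lemma factorization_le_one_add_powerDivisorCount {x m p : ℕ} (hp : p ∈ m.primeFactors)
    (hmx : m ≤ x) : (m.factorization p : ℝ) ≤ 1 + powerDivisorCount x m := by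
  obtain ⟨hp, hpm, hm⟩ := Nat.mem_primeFactors.1 hp
  have hpx : p ∈ Icc 2 x :=
    mem_Icc.2 ⟨hp.two_le, (Nat.le_of_dvd (Nat.pos_of_ne_zero hm) hpm).trans hmx⟩
  refine (factorization_le_one_add_card_pow_dvd hp hm hmx).trans ((add_le_add_iff_left 1).2 ?_)
  exact single_le_sum (f := fun n => ∑ k ∈ Icc 2 x, if n ^ k ∣ m then (1 : ℝ) else 0)
    (fun _ _ => sum_nonneg fun _ _ => by split_ifs <;> norm_num) hpx

lemma logRadRatio_le_one_add_powerDivisorCount {x m : ℕ} (hm : m ≠ 0) (hmx : m ≤ x) :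
    logRadRatio m ≤ 1 + powerDivisorCount x m :=
  logRadRatio_le hm (le_add_of_nonneg_right (powerDivisorCount_nonneg x m))
    fun _ hp => factorization_le_one_add_powerDivisorCount hp hmx

lemma sum_Icc_ite_dvd_le (x d : ℕ) :
    ∑ m ∈ Icc 1 x, (if d ∣ m then (1 : ℝ) else 0) ≤ (x : ℝ) / d := by
  rw [sum_boole, show Icc 1 x = Ioc 0 x from Icc_add_one_left_eq_Ioc 0 x,
    Nat.Ioc_filter_dvd_card_eq_div]
  exact Nat.cast_div_le

lemma sum_powerDivisorCount_le (x : ℕ) :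
    ∑ m ∈ Icc 1 x, powerDivisorCount x m ≤ ∑ n ∈ Icc 2 x, ∑ k ∈ Icc 2 x, (x : ℝ) / n ^ k := by
  unfold powerDivisorCount
  rw [sum_comm]
  gcongr with n
  rw [sum_comm]
  gcongr with k
  exact (sum_Icc_ite_dvd_le x _).trans_eq (by push_cast; rfl)

lemma sum_Icc_inv_pow_le {n : ℕ} (hn : 2 ≤ n) (K : ℕ) :
    ∑ k ∈ Icc 2 K, ((n : ℝ) ^ k)⁻¹ ≤ 2 * ((n : ℝ) ^ 2)⁻¹ := by
  have hn' : (2 : ℝ) ≤ n := by exact_mod_cast hn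
  have hinv : (n : ℝ)⁻¹ ≤ 1 / 2 := by rw [inv_le_comm₀ (by linarith) (by norm_num)]; linarith
  calc ∑ k ∈ Icc 2 K, ((n : ℝ) ^ k)⁻¹ = ∑ k ∈ Ico 2 (K + 1), (n : ℝ)⁻¹ ^ k := by
        simp only [Ico_add_one_right_eq_Icc, inv_pow]
    _ ≤ (n : ℝ)⁻¹ ^ 2 / (1 - (n : ℝ)⁻¹) :=
        geom_sum_Ico_le_of_lt_one (by positivity) (by linarith)
    _ ≤ (n : ℝ)⁻¹ ^ 2 / (1 / 2) := by gcongr; linarith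
    _ = 2 * ((n : ℝ) ^ 2)⁻¹ := by rw [inv_pow]; ring

lemma sum_Icc_two_inv_sq_le (x : ℕ) : ∑ n ∈ Icc 2 x, ((n : ℝ) ^ 2)⁻¹ ≤ 1 := by
  have h := sum_Ioo_inv_sq_le (α := ℝ) 1 (x + 1)
  rw [show Ioo 1 (x + 1) = Icc 2 x by ext; simp only [mem_Ioo, mem_Icc]; omega] at h
  exact h.trans_eq (by norm_num)

lemma sum_sum_div_pow_le (x : ℕ) :
    ∑ n ∈ Icc 2 x, ∑ k ∈ Icc 2 x, (x : ℝ) / n ^ k ≤ 2 * x := by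
  calc ∑ n ∈ Icc 2 x, ∑ k ∈ Icc 2 x, (x : ℝ) / n ^ k
      = x * ∑ n ∈ Icc 2 x, ∑ k ∈ Icc 2 x, ((n : ℝ) ^ k)⁻¹ := by
        simp only [mul_sum, div_eq_mul_inv]
    _ ≤ x * ∑ n ∈ Icc 2 x, 2 * ((n : ℝ) ^ 2)⁻¹ := by
        gcongr with n hn
        exact sum_Icc_inv_pow_le (mem_Icc.1 hn).1 x
    _ ≤ x * (2 * 1) := by
        rw [← mul_sum]
        gcongr
        exact sum_Icc_two_inv_sq_le x
    _ = 2 * x := by ring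

theorem stmt_8 : ∃ C : ℝ, 0 < C ∧ ∀ x : ℕ, 1 ≤ x →
    (x : ℝ) ≤ (∑ m ∈ Finset.Icc 1 x,
        if rad m = 1 then (1 : ℝ) else Real.log m / Real.log (rad m)) ∧
      (∑ m ∈ Finset.Icc 1 x,
        if rad m = 1 then (1 : ℝ) else Real.log m / Real.log (rad m)) ≤ C * x := by
  refine ⟨3, by norm_num, fun x _ => ?_⟩
  change (x : ℝ) ≤ ∑ m ∈ Icc 1 x, logRadRatio m ∧ ∑ m ∈ Icc 1 x, logRadRatio m ≤ 3 * x
  have hcard : ∑ _m ∈ Icc 1 x, (1 : ℝ) = x := by simp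
  constructor
  · calc (x : ℝ) = ∑ _m ∈ Icc 1 x, (1 : ℝ) := hcard.symm
      _ ≤ ∑ m ∈ Icc 1 x, logRadRatio m :=
        sum_le_sum fun m hm => one_le_logRadRatio (by grind)
  · calc ∑ m ∈ Icc 1 x, logRadRatio m ≤ ∑ m ∈ Icc 1 x, (1 + powerDivisorCount x m) :=
          sum_le_sum fun m hm =>
            logRadRatio_le_one_add_powerDivisorCount (by grind) (mem_Icc.1 hm).2
      _ = x + ∑ m ∈ Icc 1 x, powerDivisorCount x m := by rw [sum_add_distrib, hcard]
      _ ≤ x + 2 * x := by grw [sum_powerDivisorCount_le, sum_sum_div_pow_le]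
      _ = 3 * x := by ring
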